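/- Suppose J is naturally monotonically backward separable with representation maps {φ_t}_{t=0}^T, Γ_{x,t} ≠ ∅ for all x ∈ X_t and t ∈ {0,…,T−1}, each φ_t is strictly monotonic in its third argument (z > w implies φ_t(x,u,z) > φ_t(x,u,w) for all (x,u) ∈ X_t × U), and V : ℝ^n × {0,…,T} → ℝ satisfies the Generalized Bellman Equation. Then a pair (u*, x*) solves the MSOP initialized at x_0 (i.e., is feasible and minimizes J over feasible pairs) if and only if x*(0) = x_0, x*(k+1) = f(x*(k),u*(k),k), and u*(k) ∈ arg inf_{u ∈ Γ_{x*(k),k}} φ_k(x*(k), u, V(f(x*(k),u,k), k+1)) for every k ∈ {0,…,T−1}. -/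

import Mathlib

open Set Filter MeasureTheory

/-- `nest φ φT u x t k` is the backward composition of representation maps
`φ t (x t) (u t) (φ (t+1) (x (t+1)) (u (t+1)) (… (φT (x (t+k))) …)))`
with `k` composition steps, terminating at time `t + k`. -/
def nest {α β : Type*} (φ : ℕ → α → β → ℝ → ℝ) (φT : α → ℝ)
    (u : ℕ → β) (x : ℕ → α) : ℕ → ℕ → ℝ
  | t, 0 => φT (x t)
  | t, k + 1 => φ t (x t) (u t) (nest φ φT u x (t + 1) k)

/-- `imSet φ φT X U t k` is the image of the representation map at time `t`
over its domain, where `k` is the number of remaining steps until the terminal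
time `t + k` (so `Image φ_t = imSet φ φT X U t (T - t)` when the horizon is `T`). -/
def imSet {α β : Type*} (φ : ℕ → α → β → ℝ → ℝ) (φT : α → ℝ)
    (X : ℕ → Set α) (U : Set β) : ℕ → ℕ → Set ℝ
  | t, 0 => φT '' X t
  | t, k + 1 =>
      {z | ∃ a ∈ X t, ∃ b ∈ U, ∃ w ∈ imSet φ φT X U (t + 1) k, z = φ t a b w}

/-- `J` is represented on its domain by the representation maps `φ, φT`
(backward composition with horizon `T`). -/
def IsRep {α β : Type*} (T : ℕ) (X : ℕ → Set α) (U : Set β)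
    (J : (ℕ → β) → (ℕ → α) → ℝ) (φ : ℕ → α → β → ℝ → ℝ) (φT : α → ℝ) : Prop :=
  ∀ u x, (∀ t, t < T → u t ∈ U) → (∀ t, t ≤ T → x t ∈ X t) →
    J u x = nest φ φT u x 0 T

/-- each representation map is monotone in its third argument on the image of
the next representation map. -/
def MonoRep {α β : Type*} (T : ℕ) (X : ℕ → Set α) (U : Set β)
    (φ : ℕ → α → β → ℝ → ℝ) (φT : α → ℝ) : Prop :=
  ∀ t, t < T → ∀ a ∈ X t, ∀ b ∈ U,
    ∀ z ∈ imSet φ φT X U (t + 1) (T - (t + 1)),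
      ∀ w ∈ imSet φ φT X U (t + 1) (T - (t + 1)),
        w ≤ z → φ t a b w ≤ φ t a b z

/-- each representation map is strictly monotone in its third argument. -/
def StrictMonoRep {α β : Type*} (T : ℕ) (X : ℕ → Set α) (U : Set β)
    (φ : ℕ → α → β → ℝ → ℝ) (φT : α → ℝ) : Prop :=
  ∀ t, t < T → ∀ a ∈ X t, ∀ b ∈ U,
    ∀ z ∈ imSet φ φT X U (t + 1) (T - (t + 1)),
      ∀ w ∈ imSet φ φT X U (t + 1) (T - (t + 1)),
        w < z → φ t a b w < φ t a b z

/-- each representation map is upper semi-continuous in its third argument along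
monotonically decreasing sequences in the image of the next representation map. -/
def USCRep {α β : Type*} (T : ℕ) (X : ℕ → Set α) (U : Set β)
    (φ : ℕ → α → β → ℝ → ℝ) (φT : α → ℝ) : Prop :=
  ∀ t, t < T → ∀ a ∈ X t, ∀ b ∈ U, ∀ z : ℕ → ℝ,
    (∀ i, z i ∈ imSet φ φT X U (t + 1) (T - (t + 1))) →
    (∀ i, z (i + 1) ≤ z i) →
    ∀ L : ℝ, Tendsto z atTop (nhds L) →
      Tendsto (fun i => φ t a b (z i)) atTop (nhds (φ t a b L))

/-- each representation map has bounded image. -/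
def BddRep {α β : Type*} (T : ℕ) (X : ℕ → Set α) (U : Set β)
    (φ : ℕ → α → β → ℝ → ℝ) (φT : α → ℝ) : Prop :=
  ∀ t, t ≤ T → ∃ R, 0 < R ∧ ∀ z ∈ imSet φ φT X U t (T - t), |z| < R

/-- `GamSeq T f X U x0 s u x` says that the input sequence `(u s, …, u (T-1))`
belongs to `Γ_{x0,[s,T-1]}`, with `x` the corresponding state sequence:
`x s = x0`, `x (t+1) = f (x t) (u t) t`, `u t ∈ Γ_{x t, t}` for `s ≤ t ≤ T-1`. -/
def GamSeq {α β : Type*} (T : ℕ) (f : α → β → ℕ → α) (X : ℕ → Set α)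
    (U : Set β) (x0 : α) (s : ℕ) (u : ℕ → β) (x : ℕ → α) : Prop :=
  x s = x0 ∧ ∀ t, s ≤ t → t < T →
    u t ∈ U ∧ x (t + 1) = f (x t) (u t) t ∧ x (t + 1) ∈ X (t + 1)

/-- `(u,x)` is feasible for the MSOP with horizon `T` initialized at `x0` at time `0`. -/
def Feas {α β : Type*} (T : ℕ) (f : α → β → ℕ → α) (X : ℕ → Set α)
    (U : Set β) (x0 : α) (u : ℕ → β) (x : ℕ → α) : Prop :=
  x 0 = x0 ∧ (∀ t, t ≤ T → x t ∈ X t) ∧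
    ∀ t, t < T → u t ∈ U ∧ x (t + 1) = f (x t) (u t) t

/-- `(u,x)` is feasible for the MSOP with horizon `T` initialized at `x0` at time `s`. -/
def FeasFrom {α β : Type*} (T : ℕ) (f : α → β → ℕ → α) (X : ℕ → Set α)
    (U : Set β) (x0 : α) (s : ℕ) (u : ℕ → β) (x : ℕ → α) : Prop :=
  x s = x0 ∧ (∀ t, s ≤ t → t ≤ T → x t ∈ X t) ∧
    ∀ t, s ≤ t → t < T → u t ∈ U ∧ x (t + 1) = f (x t) (u t) t

/-!
The value `V a s` of any solution of the generalized Bellman equation is the infimum of the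
costs-to-go `nest φ φT u x s (T - s)` over the feasible tails starting from `a` at time `s`.
This is a backward induction whose key step is that monotonicity together with upper
semi-continuity along decreasing sequences lets `φ s a b` commute with such infima.
Along a feasible pair the cost-to-go then dominates `V`, with
`V (x k) k ≤ φ k (x k) (u k) (V (x (k + 1)) (k + 1)) ≤ nest φ φT u x k (T - k)`.
Optimality means equality at `k = 0`, and strict monotonicity propagates equality of both
inequalities forward in time; conversely, Bellman minimizers make both inequalities equalities
by backward induction.
-/

/-- The paper's notion of a naturally monotonically backward separable cost, without the
representation of `J` itself. -/
structure NaturallyMonotoneRep {α β : Type*} (T : ℕ) (X : ℕ → Set α) (U : Set β)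
    (φ : ℕ → α → β → ℝ → ℝ) (φT : α → ℝ) : Prop where
  mono : MonoRep T X U φ φT
  usc : USCRep T X U φ φT
  bdd : BddRep T X U φ φT

def IsGBESolution {α β : Type*} (T : ℕ) (f : α → β → ℕ → α) (X : ℕ → Set α) (U : Set β)
    (φ : ℕ → α → β → ℝ → ℝ) (φT : α → ℝ) (V : α → ℕ → ℝ) : Prop :=
  (∀ a ∈ X T, V a T = φT a) ∧
    ∀ t, t < T → ∀ a ∈ X t, V a t =
      sInf {y : ℝ | ∃ b ∈ U, f a b t ∈ X (t + 1) ∧ y = φ t a b (V (f a b t) (t + 1))}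

def tailCosts {α β : Type*} (T : ℕ) (f : α → β → ℕ → α) (X : ℕ → Set α) (U : Set β)
    (φ : ℕ → α → β → ℝ → ℝ) (φT : α → ℝ) (a : α) (s : ℕ) : Set ℝ :=
  {y | ∃ u x, FeasFrom T f X U a s u x ∧ y = nest φ φT u x s (T - s)}

section Backward

variable {α β : Type*} {T : ℕ} {f : α → β → ℕ → α} {X : ℕ → Set α} {U : Set β}
  {φ : ℕ → α → β → ℝ → ℝ} {φT : α → ℝ} {u : ℕ → β} {x : ℕ → α} {a : α} {b : β} {s : ℕ}

lemma nest_succ (t k : ℕ) :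
    nest φ φT u x t (k + 1) = φ t (x t) (u t) (nest φ φT u x (t + 1) k) := rfl

lemma nest_congr {u' : ℕ → β} {x' : ℕ → α} {t k : ℕ}
    (hu : ∀ i, t ≤ i → i < t + k → u' i = u i) (hx : ∀ i, t ≤ i → i ≤ t + k → x' i = x i) :
    nest φ φT u' x' t k = nest φ φT u x t k := by
  induction k generalizing t with
  | zero => exact congrArg φT (hx t le_rfl (by omega))
  | succ k ih =>
    rw [nest_succ, nest_succ, hx t le_rfl (by omega), hu t le_rfl (by omega),
      ih (fun i h1 h2 => hu i (by omega) (by omega)) (fun i h1 h2 => hx i (by omega) (by omega))]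

lemma nest_update_update (k : ℕ) :
    nest φ φT (Function.update u s b) (Function.update x s a) s (k + 1) =
      φ s a b (nest φ φT u x (s + 1) k) := by
  rw [nest_succ, Function.update_self, Function.update_self]
  exact congrArg _ (nest_congr (fun i h _ => Function.update_of_ne (by omega) b u)
    (fun i h _ => Function.update_of_ne (by omega) a x))

lemma Feas.feasFrom {x0 : α} (h : Feas T f X U x0 u x) (k : ℕ) :
    FeasFrom T f X U (x k) k u x :=
  ⟨rfl, fun t _ ht => h.2.1 t ht, fun t _ ht => h.2.2 t ht⟩

lemma feas_iff_feasFrom_zero : Feas T f X U a u x ↔ FeasFrom T f X U a 0 u x :=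
  ⟨fun h => ⟨h.1, fun t _ ht => h.2.1 t ht, fun t _ ht => h.2.2 t ht⟩,
    fun h => ⟨h.1, fun t ht => h.2.1 t t.zero_le ht, fun t ht => h.2.2 t t.zero_le ht⟩⟩

lemma FeasFrom.mem (h : FeasFrom T f X U a s u x) (hs : s ≤ T) : a ∈ X s :=
  h.1 ▸ h.2.1 s le_rfl hs

lemma FeasFrom.step (h : FeasFrom T f X U a s u x) (hs : s < T) :
    u s ∈ U ∧ x (s + 1) = f a (u s) s ∧ x (s + 1) ∈ X (s + 1) := by
  obtain ⟨hxs, hX, hdyn⟩ := h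
  exact ⟨(hdyn s le_rfl hs).1, hxs ▸ (hdyn s le_rfl hs).2, hX (s + 1) (by omega) hs⟩

lemma FeasFrom.tail (h : FeasFrom T f X U a s u x) :
    FeasFrom T f X U (x (s + 1)) (s + 1) u x :=
  ⟨rfl, fun t ht => h.2.1 t (by omega), fun t ht => h.2.2 t (by omega)⟩

lemma FeasFrom.nest_eq (h : FeasFrom T f X U a s u x) (hs : s < T) :
    nest φ φT u x s (T - s) = φ s a (u s) (nest φ φT u x (s + 1) (T - (s + 1))) := by
  rw [show T - s = T - (s + 1) + 1 by omega, nest_succ, h.1]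

lemma FeasFrom.cons (ha : a ∈ X s) (hb : b ∈ U)
    (h : FeasFrom T f X U (f a b s) (s + 1) u x) :
    FeasFrom T f X U a s (Function.update u s b) (Function.update x s a) := by
  obtain ⟨hx1, hX, hdyn⟩ := h
  refine ⟨Function.update_self s a x, fun t hst htT => ?_, fun t hst htT => ?_⟩
  · rcases hst.eq_or_lt with rfl | hlt
    · rwa [Function.update_self]
    · rw [Function.update_of_ne (by omega)]
      exact hX t hlt htT
  · rcases hst.eq_or_lt with rfl | hlt
    · rw [Function.update_self, Function.update_self, Function.update_of_ne (Nat.succ_ne_self _)]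
      exact ⟨hb, hx1⟩
    · simp only [Function.update_of_ne (by omega : t ≠ s),
        Function.update_of_ne (by omega : t + 1 ≠ s)]
      exact hdyn t hlt htT

lemma exists_feasFrom [Nonempty β] (hGam : ∀ t, t < T → ∀ a ∈ X t, ∃ b ∈ U, f a b t ∈ X (t + 1))
    (hs : s ≤ T) (ha : a ∈ X s) : ∃ u x, FeasFrom T f X U a s u x := by
  obtain ⟨d, hd⟩ : ∃ d, s + d = T := ⟨T - s, by omega⟩
  induction d generalizing s a with
  | zero =>
    refine ⟨fun _ => Classical.arbitrary β, fun _ => a, rfl, fun t h1 h2 => ?_, by omega⟩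
    obtain rfl : t = s := by omega
    exact ha
  | succ d ih =>
    obtain ⟨b, hb, hfb⟩ := hGam s (by omega) a ha
    obtain ⟨u, x, h⟩ := ih (by omega) hfb (by omega)
    exact ⟨_, _, h.cons ha hb⟩

lemma FeasFrom.nest_mem_imSet (h : FeasFrom T f X U a s u x) {k : ℕ} (hk : s + k ≤ T) :
    nest φ φT u x s k ∈ imSet φ φT X U s k := by
  induction k generalizing s a with
  | zero => exact ⟨x s, h.2.1 s le_rfl (by omega), rfl⟩
  | succ k ih =>
    exact ⟨x s, h.2.1 s le_rfl (by omega), u s, (h.step (by omega)).1, _,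
      ih h.tail (by omega), rfl⟩

lemma tailCosts_subset_imSet (hs : s ≤ T) :
    tailCosts T f X U φ φT a s ⊆ imSet φ φT X U s (T - s) := by
  rintro _ ⟨u, x, h, rfl⟩
  exact h.nest_mem_imSet (by omega)

lemma tailCosts_nonempty [Nonempty β]
    (hGam : ∀ t, t < T → ∀ a ∈ X t, ∃ b ∈ U, f a b t ∈ X (t + 1)) (hs : s ≤ T) (ha : a ∈ X s) :
    (tailCosts T f X U φ φT a s).Nonempty := by
  obtain ⟨u, x, h⟩ := exists_feasFrom hGam hs ha
  exact ⟨_, u, x, h, rfl⟩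

lemma bddBelow_tailCosts (hBdd : BddRep T X U φ φT) (hs : s ≤ T) :
    BddBelow (tailCosts T f X U φ φT a s) := by
  obtain ⟨R, -, hR⟩ := hBdd s hs
  exact ⟨-R, fun y hy => (abs_lt.1 (hR y (tailCosts_subset_imSet hs hy))).1.le⟩

lemma phi_mem_tailCosts (ha : a ∈ X s) (hb : b ∈ U) (hs : s < T) {w : ℝ}
    (hw : w ∈ tailCosts T f X U φ φT (f a b s) (s + 1)) :
    φ s a b w ∈ tailCosts T f X U φ φT a s := by
  obtain ⟨u, x, h, rfl⟩ := hw
  refine ⟨_, _, h.cons ha hb, ?_⟩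
  rw [show T - s = T - (s + 1) + 1 by omega, nest_update_update]

/-- `sInf S` is the limit of a decreasing sequence in `S`, along which `φ s a b` is upper
semi-continuous. -/
lemma isGLB_image_phi_csInf (hMono : MonoRep T X U φ φT) (hUSC : USCRep T X U φ φT)
    (hs : s < T) (ha : a ∈ X s) (hb : b ∈ U) {S : Set ℝ}
    (hS : S ⊆ imSet φ φT X U (s + 1) (T - (s + 1))) (hne : S.Nonempty) (hbdd : BddBelow S) :
    IsGLB (φ s a b '' S) (φ s a b (sInf S)) := by
  obtain ⟨z, hanti, hz, hzS⟩ := exists_seq_tendsto_sInf hne hbdd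
  have hφz : Tendsto (fun i => φ s a b (z i)) atTop (nhds (φ s a b (sInf S))) :=
    hUSC s hs a ha b hb z (fun i => hS (hzS i)) (fun i => hanti i.le_succ) _ hz
  have hle_z : ∀ i, φ s a b (sInf S) ≤ φ s a b (z i) := fun i =>
    le_of_tendsto hφz (eventually_atTop.2 ⟨i, fun j hj =>
      hMono s hs a ha b hb _ (hS (hzS i)) _ (hS (hzS j)) (hanti hj)⟩)
  refine ⟨?_, fun c hc => ge_of_tendsto hφz (Eventually.of_forall fun i => hc ⟨z i, hzS i, rfl⟩)⟩
  rintro _ ⟨w, hw, rfl⟩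
  rcases (csInf_le hbdd hw).eq_or_lt with heq | hlt
  · rw [heq]
  · obtain ⟨i, hi⟩ := ((tendsto_order.1 hz).2 w hlt).exists
    exact (hle_z i).trans (hMono s hs a ha b hb _ (hS hw) _ (hS (hzS i)) hi.le)

lemma phi_csInf_lt (hMono : MonoRep T X U φ φT) (hUSC : USCRep T X U φ φT)
    (hStrict : StrictMonoRep T X U φ φT) (hs : s < T) (ha : a ∈ X s) (hb : b ∈ U) {S : Set ℝ}
    (hS : S ⊆ imSet φ φT X U (s + 1) (T - (s + 1))) (hbdd : BddBelow S) {w : ℝ} (hw : w ∈ S)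
    (hlt : sInf S < w) : φ s a b (sInf S) < φ s a b w := by
  obtain ⟨v, hv, hvw⟩ := exists_lt_of_csInf_lt ⟨w, hw⟩ hlt
  exact ((isGLB_image_phi_csInf hMono hUSC hs ha hb hS ⟨w, hw⟩ hbdd).1 ⟨v, hv, rfl⟩).trans_lt
    (hStrict s hs a ha b hb _ (hS hw) _ (hS hv) hvw)

lemma csInf_tailCosts_le_phi [Nonempty β] (hrep : NaturallyMonotoneRep T X U φ φT)
    (hGam : ∀ t, t < T → ∀ a ∈ X t, ∃ b ∈ U, f a b t ∈ X (t + 1))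
    (hs : s < T) (ha : a ∈ X s) (hb : b ∈ U) (hfb : f a b s ∈ X (s + 1)) :
    sInf (tailCosts T f X U φ φT a s) ≤
      φ s a b (sInf (tailCosts T f X U φ φT (f a b s) (s + 1))) := by
  refine (isGLB_image_phi_csInf hrep.mono hrep.usc hs ha hb (tailCosts_subset_imSet hs)
    (tailCosts_nonempty hGam hs hfb) (bddBelow_tailCosts hrep.bdd hs)).2 ?_
  rintro _ ⟨w, hw, rfl⟩
  exact csInf_le (bddBelow_tailCosts hrep.bdd hs.le) (phi_mem_tailCosts ha hb hs hw)

lemma FeasFrom.phi_csInf_tailCosts_le_nest [Nonempty β] (hrep : NaturallyMonotoneRep T X U φ φT)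
    (hGam : ∀ t, t < T → ∀ a ∈ X t, ∃ b ∈ U, f a b t ∈ X (t + 1))
    (h : FeasFrom T f X U a s u x) (hs : s < T) :
    φ s a (u s) (sInf (tailCosts T f X U φ φT (x (s + 1)) (s + 1))) ≤
      nest φ φT u x s (T - s) := by
  obtain ⟨hu, -, hx1⟩ := h.step hs
  rw [h.nest_eq hs]
  exact (isGLB_image_phi_csInf hrep.mono hrep.usc hs (h.mem hs.le) hu
    (tailCosts_subset_imSet hs) (tailCosts_nonempty hGam hs hx1) (bddBelow_tailCosts hrep.bdd hs)).1
    ⟨_, ⟨u, x, h.tail, rfl⟩, rfl⟩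

lemma IsGBESolution.eq_csInf_tailCosts [Nonempty β] {V : α → ℕ → ℝ}
    (hV : IsGBESolution T f X U φ φT V) (hrep : NaturallyMonotoneRep T X U φ φT)
    (hGam : ∀ t, t < T → ∀ a ∈ X t, ∃ b ∈ U, f a b t ∈ X (t + 1))
    (hs : s ≤ T) (ha : a ∈ X s) : V a s = sInf (tailCosts T f X U φ φT a s) := by
  obtain ⟨d, hd⟩ : ∃ d, s + d = T := ⟨T - s, by omega⟩
  induction d generalizing s a with
  | zero =>
    have hsub : tailCosts T f X U φ φT a s ⊆ {φT a} := by
      rintro _ ⟨u, x, h, rfl⟩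
      rw [show T - s = 0 by omega, ← h.1]
      rfl
    rw [(tailCosts_nonempty hGam hs ha).subset_singleton_iff.1 hsub, csInf_singleton,
      show s = T by omega, hV.1 a (by rwa [← hd])]
  | succ d ih =>
    have hs' : s < T := by omega
    have ih' : ∀ {a'}, a' ∈ X (s + 1) → V a' (s + 1) = sInf (tailCosts T f X U φ φT a' (s + 1)) :=
      fun ha' => ih hs' ha' (by omega)
    obtain ⟨b, hb, hfb⟩ := hGam s hs' a ha
    rw [hV.2 s hs' a ha]
    refine IsGLB.csInf_eq ⟨?_, fun c hc => ?_⟩ ⟨_, b, hb, hfb, rfl⟩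
    · rintro _ ⟨b, hb, hfb, rfl⟩
      rw [ih' hfb]
      exact csInf_tailCosts_le_phi hrep hGam hs' ha hb hfb
    · refine le_csInf (tailCosts_nonempty hGam hs ha) ?_
      rintro _ ⟨u, x, h, rfl⟩
      obtain ⟨hu, hx1, hx1X⟩ := h.step hs'
      calc c ≤ φ s a (u s) (V (x (s + 1)) (s + 1)) := hc ⟨u s, hu, hx1 ▸ hx1X, by rw [hx1]⟩
        _ = φ s a (u s) (sInf (tailCosts T f X U φ φT (x (s + 1)) (s + 1))) := by rw [ih' hx1X]
        _ ≤ _ := h.phi_csInf_tailCosts_le_nest hrep hGam hs'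

lemma IsGBESolution.eq_nest_of_isMin {V : α → ℕ → ℝ} (hV : IsGBESolution T f X U φ φT V)
    (h : FeasFrom T f X U a s u x) (hs : s ≤ T)
    (hmin : ∀ k, s ≤ k → k < T → ∀ b ∈ U, f (x k) b k ∈ X (k + 1) →
      φ k (x k) (u k) (V (f (x k) (u k) k) (k + 1)) ≤ φ k (x k) b (V (f (x k) b k) (k + 1))) :
    V a s = nest φ φT u x s (T - s) := by
  obtain ⟨d, hd⟩ : ∃ d, s + d = T := ⟨T - s, by omega⟩
  induction d generalizing s a with
  | zero =>
    rw [show T - s = 0 by omega, ← h.1, show s = T by omega]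
    exact hV.1 _ (h.2.1 T (by omega) le_rfl)
  | succ d ih =>
    have hs' : s < T := by omega
    obtain ⟨hu, hx1, hx1X⟩ := h.step hs'
    rw [h.nest_eq hs', ← ih h.tail hs' (fun k hk => hmin k (by omega)) (by omega),
      hV.2 s hs' a (h.mem hs), hx1]
    refine IsLeast.csInf_eq ⟨⟨u s, hu, hx1 ▸ hx1X, rfl⟩, ?_⟩
    rintro _ ⟨b, hb, hfb, rfl⟩
    simpa only [h.1] using hmin s le_rfl hs' b hb (h.1 ▸ hfb)

section ValueFunction

variable [Nonempty β] {V : α → ℕ → ℝ}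

lemma IsGBESolution.le_nest (hV : IsGBESolution T f X U φ φT V)
    (hrep : NaturallyMonotoneRep T X U φ φT)
    (hGam : ∀ t, t < T → ∀ a ∈ X t, ∃ b ∈ U, f a b t ∈ X (t + 1))
    (h : FeasFrom T f X U a s u x) (hs : s ≤ T) : V a s ≤ nest φ φT u x s (T - s) := by
  rw [hV.eq_csInf_tailCosts hrep hGam hs (h.mem hs)]
  exact csInf_le (bddBelow_tailCosts hrep.bdd hs) ⟨u, x, h, rfl⟩

lemma IsGBESolution.le_phi (hV : IsGBESolution T f X U φ φT V)
    (hrep : NaturallyMonotoneRep T X U φ φT)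
    (hGam : ∀ t, t < T → ∀ a ∈ X t, ∃ b ∈ U, f a b t ∈ X (t + 1))
    (hs : s < T) (ha : a ∈ X s) (hb : b ∈ U) (hfb : f a b s ∈ X (s + 1)) :
    V a s ≤ φ s a b (V (f a b s) (s + 1)) := by
  rw [hV.eq_csInf_tailCosts hrep hGam hs.le ha, hV.eq_csInf_tailCosts hrep hGam hs hfb]
  exact csInf_tailCosts_le_phi hrep hGam hs ha hb hfb

lemma IsGBESolution.eq_nest_succ_of_eq_nest (hV : IsGBESolution T f X U φ φT V)
    (hrep : NaturallyMonotoneRep T X U φ φT)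
    (hGam : ∀ t, t < T → ∀ a ∈ X t, ∃ b ∈ U, f a b t ∈ X (t + 1))
    (hStrict : StrictMonoRep T X U φ φT) (h : FeasFrom T f X U a s u x) (hs : s < T)
    (heq : V a s = nest φ φT u x s (T - s)) :
    V (x (s + 1)) (s + 1) = nest φ φT u x (s + 1) (T - (s + 1)) ∧
      V a s = φ s a (u s) (V (x (s + 1)) (s + 1)) := by
  obtain ⟨hu, hx1, hx1X⟩ := h.step hs
  have hupper : V a s ≤ φ s a (u s) (V (x (s + 1)) (s + 1)) := by
    rw [hx1]
    exact hV.le_phi hrep hGam hs (h.mem hs.le) hu (hx1 ▸ hx1X)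
  have hnest := h.nest_eq (φ := φ) (φT := φT) hs
  have htail : V (x (s + 1)) (s + 1) = nest φ φT u x (s + 1) (T - (s + 1)) := by
    refine (hV.le_nest hrep hGam h.tail hs).antisymm (not_lt.1 fun hlt => ?_)
    have hS := hV.eq_csInf_tailCosts hrep hGam hs hx1X
    rw [hS] at hlt
    have hφlt := phi_csInf_lt hrep.mono hrep.usc hStrict hs (h.mem hs.le) hu
      (tailCosts_subset_imSet hs) (bddBelow_tailCosts hrep.bdd hs) ⟨u, x, h.tail, rfl⟩ hlt
    rw [← hS] at hφlt
    linarith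
  refine ⟨htail, hupper.antisymm ?_⟩
  rw [htail, heq, hnest]

lemma IsGBESolution.isMin_of_eq_nest (hV : IsGBESolution T f X U φ φT V)
    (hrep : NaturallyMonotoneRep T X U φ φT)
    (hGam : ∀ t, t < T → ∀ a ∈ X t, ∃ b ∈ U, f a b t ∈ X (t + 1))
    (hStrict : StrictMonoRep T X U φ φT) (h : Feas T f X U a u x)
    (h0 : V a 0 = nest φ φT u x 0 T) :
    ∀ k, k < T → ∀ b ∈ U, f (x k) b k ∈ X (k + 1) →
      φ k (x k) (u k) (V (f (x k) (u k) k) (k + 1)) ≤ φ k (x k) b (V (f (x k) b k) (k + 1)) := by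
  have hVnest : ∀ k, k ≤ T → V (x k) k = nest φ φT u x k (T - k) := by
    intro k hk
    induction k with
    | zero => exact h.1 ▸ h0
    | succ k ih =>
      exact (hV.eq_nest_succ_of_eq_nest hrep hGam hStrict (h.feasFrom k) (by omega)
        (ih (by omega))).1
  intro k hk b hb hfb
  rw [← (h.2.2 k hk).2, ← (hV.eq_nest_succ_of_eq_nest hrep hGam hStrict (h.feasFrom k) hk
    (hVnest k hk.le)).2]
  exact hV.le_phi hrep hGam hk (h.2.1 k hk.le) hb hfb

lemma IsGBESolution.forall_le_iff_eq_nest (hV : IsGBESolution T f X U φ φT V)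
    (hrep : NaturallyMonotoneRep T X U φ φT)
    (hGam : ∀ t, t < T → ∀ a ∈ X t, ∃ b ∈ U, f a b t ∈ X (t + 1))
    {J : (ℕ → β) → (ℕ → α) → ℝ} (hJ : IsRep T X U J φ φT) (h : Feas T f X U a u x) :
    (∀ u' x', Feas T f X U a u' x' → J u x ≤ J u' x') ↔ V a 0 = nest φ φT u x 0 T := by
  have hJ_eq : ∀ {u' x'}, Feas T f X U a u' x' → J u' x' = nest φ φT u' x' 0 T :=
    fun h' => hJ _ _ (fun t ht => (h'.2.2 t ht).1) h'.2.1
  have hfrom := feas_iff_feasFrom_zero.1 h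
  rw [hJ_eq h]
  constructor
  · intro hopt
    refine (hV.le_nest hrep hGam hfrom T.zero_le).antisymm ?_
    rw [hV.eq_csInf_tailCosts hrep hGam T.zero_le (hfrom.mem T.zero_le)]
    refine le_csInf (tailCosts_nonempty hGam T.zero_le (hfrom.mem T.zero_le)) ?_
    rintro _ ⟨u', x', h', rfl⟩
    have h'' := feas_iff_feasFrom_zero.2 h'
    simpa only [Nat.sub_zero, hJ_eq h''] using hopt _ _ h''
  · intro heq u' x' h'
    rw [← heq, hJ_eq h']
    exact hV.le_nest hrep hGam (feas_iff_feasFrom_zero.1 h') T.zero_le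

end ValueFunction

end Backward

theorem GBE_necessary_and_sufficient_conditions_general
    {n m : ℕ} (T : ℕ)
    (X : ℕ → Set (Fin n → ℝ)) (U : Set (Fin m → ℝ))
    (f : (Fin n → ℝ) → (Fin m → ℝ) → ℕ → (Fin n → ℝ))
    (x0 : Fin n → ℝ) (hx0 : x0 ∈ X 0)
    (J : (ℕ → Fin m → ℝ) → (ℕ → Fin n → ℝ) → ℝ)
    (φ : ℕ → (Fin n → ℝ) → (Fin m → ℝ) → ℝ → ℝ) (φT : (Fin n → ℝ) → ℝ)
    (hRep : IsRep T X U J φ φT) (hMono : MonoRep T X U φ φT)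
    (hUSC : USCRep T X U φ φT) (hBdd : BddRep T X U φ φT)
    (hStrict : StrictMonoRep T X U φ φT)
    (hGam : ∀ t, t < T → ∀ a ∈ X t, ∃ b ∈ U, f a b t ∈ X (t + 1))
    (V : (Fin n → ℝ) → ℕ → ℝ)
    (hVT : ∀ a ∈ X T, V a T = φT a)
    (hV : ∀ t, t < T → ∀ a ∈ X t, V a t =
      sInf {y : ℝ | ∃ b ∈ U, f a b t ∈ X (t + 1) ∧
        y = φ t a b (V (f a b t) (t + 1))})
    (ustar : ℕ → Fin m → ℝ) (xstar : ℕ → Fin n → ℝ) :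
    (Feas T f X U x0 ustar xstar ∧
        ∀ u x, Feas T f X U x0 u x → J ustar xstar ≤ J u x) ↔
      (xstar 0 = x0 ∧
        (∀ k, k < T → xstar (k + 1) = f (xstar k) (ustar k) k) ∧
        ∀ k, k < T →
          (ustar k ∈ U ∧ f (xstar k) (ustar k) k ∈ X (k + 1)) ∧
          ∀ b ∈ U, f (xstar k) b k ∈ X (k + 1) →
            φ k (xstar k) (ustar k) (V (f (xstar k) (ustar k) k) (k + 1)) ≤
              φ k (xstar k) b (V (f (xstar k) b k) (k + 1))) := by
  have hGBE : IsGBESolution T f X U φ φT V := ⟨hVT, hV⟩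
  have hrep : NaturallyMonotoneRep T X U φ φT := ⟨hMono, hUSC, hBdd⟩
  constructor
  · rintro ⟨hfeas, hopt⟩
    have h0 := (hGBE.forall_le_iff_eq_nest hrep hGam hRep hfeas).1 hopt
    refine ⟨hfeas.1, fun k hk => (hfeas.2.2 k hk).2, fun k hk => ⟨?_,
      hGBE.isMin_of_eq_nest hrep hGam hStrict hfeas h0 k hk⟩⟩
    obtain ⟨hu, hdyn⟩ := hfeas.2.2 k hk
    exact ⟨hu, hdyn ▸ hfeas.2.1 (k + 1) hk⟩
  · rintro ⟨h0, hdyn, hmin⟩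
    have hX : ∀ k, k ≤ T → xstar k ∈ X k := by
      intro k hk
      induction k with
      | zero => exact h0 ▸ hx0
      | succ k _ => exact hdyn k hk ▸ (hmin k hk).1.2
    have hfeas : Feas T f X U x0 ustar xstar := ⟨h0, hX, fun k hk => ⟨(hmin k hk).1.1, hdyn k hk⟩⟩
    refine ⟨hfeas, (hGBE.forall_le_iff_eq_nest hrep hGam hRep hfeas).2 ?_⟩
    exact hGBE.eq_nest_of_isMin (feas_iff_feasFrom_zero.1 hfeas) T.zero_le
      fun k _ hk => (hmin k hk).2

/-- (Necessary and sufficient conditions.) Under the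
hypotheses of the sufficiency result, if in addition the representation maps
are strictly monotonic in their third argument, then `(u*, x*)` solves the
MSOP initialized at `x0` (is feasible and minimizes `J` over feasible pairs)
if and only if it starts at `x0`, follows the dynamics, and `u*(k)` minimizes
`u ↦ φ_k(x*(k), u, V(f(x*(k),u,k), k+1))` over `Γ_{x*(k),k}` for every `k < T`. -/
theorem GBE_necessary_and_sufficient_conditions
    {n m : ℕ} (T : ℕ) (hT : 1 ≤ T)
    (X : ℕ → Set (Fin n → ℝ)) (U : Set (Fin m → ℝ))
    (f : (Fin n → ℝ) → (Fin m → ℝ) → ℕ → (Fin n → ℝ))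
    (x0 : Fin n → ℝ) (hx0 : x0 ∈ X 0)
    (J : (ℕ → Fin m → ℝ) → (ℕ → Fin n → ℝ) → ℝ)
    (φ : ℕ → (Fin n → ℝ) → (Fin m → ℝ) → ℝ → ℝ) (φT : (Fin n → ℝ) → ℝ)
    (hRep : IsRep T X U J φ φT) (hMono : MonoRep T X U φ φT)
    (hUSC : USCRep T X U φ φT) (hBdd : BddRep T X U φ φT)
    (hStrict : StrictMonoRep T X U φ φT)
    (hGam : ∀ t, t < T → ∀ a ∈ X t, ∃ b ∈ U, f a b t ∈ X (t + 1))
    (V : (Fin n → ℝ) → ℕ → ℝ)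
    (hVT : ∀ a ∈ X T, V a T = φT a)
    (hV : ∀ t, t < T → ∀ a ∈ X t, V a t =
      sInf {y : ℝ | ∃ b ∈ U, f a b t ∈ X (t + 1) ∧
        y = φ t a b (V (f a b t) (t + 1))})
    (ustar : ℕ → Fin m → ℝ) (xstar : ℕ → Fin n → ℝ) :
    (Feas T f X U x0 ustar xstar ∧
        ∀ u x, Feas T f X U x0 u x → J ustar xstar ≤ J u x) ↔
      (xstar 0 = x0 ∧
        (∀ k, k < T → xstar (k + 1) = f (xstar k) (ustar k) k) ∧
        ∀ k, k < T →
          (ustar k ∈ U ∧ f (xstar k) (ustar k) k ∈ X (k + 1)) ∧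
          ∀ b ∈ U, f (xstar k) b k ∈ X (k + 1) →
            φ k (xstar k) (ustar k) (V (f (xstar k) (ustar k) k) (k + 1)) ≤
              φ k (xstar k) b (V (f (xstar k) b k) (k + 1))) :=
  GBE_necessary_and_sufficient_conditions_general T X U f x0 hx0 J φ φT hRep hMono hUSC hBdd hStrict
    hGam V hVT hV ustar xstar
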